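/- (Lemma: removal step for a pair of removable edges). Let (F, π) be a semi-simple configuration having at least one removable pair of edges. Then there exist semi-simple configurations (F_0, π_0), (F_1, π_1), …, (F_{|π|−1}, π_{|π|−1}) with |π_i| = |π| − 1 for all i, such that ∑_{ℓ ∈ C(π)} γ(Ψ; F, ℓ) = ∑_{ℓ ∈ C(π_0)} γ(Ψ; F_0, ℓ) − ∑_{i=1}^{|π|−1} ∑_{ℓ ∈ C(π_i)} γ(Ψ; F_i, ℓ) for every matrix Ψ ∈ ℝ^{N×N} with (ΨΨᵀ)_{ii} = 1 for all i ∈ [N]. Furthermore, if (F, π) has exactly one non-trivial root, then each (F_i, π_i) also has exactly one non-trivial root. -/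

import Mathlib

open Filter Matrix
open scoped ENNReal NNReal Topology

noncomputable section
attribute [local instance] Classical.propDecidable

/-- A decorated forest `F = (V, E, h, p, q)` (Definition 5.1 of the paper).
Vertices are `{0, …, n-1}`; `parent v = some u` encodes the directed edge `u → v`.
The decreasing height function along edges guarantees that the directed graph
`(V, E)` is a forest. -/
structure DecForest where
  n : ℕ
  parent : Fin n → Option (Fin n)
  height : Fin n → ℕ
  pw : Fin n → ℕ
  qw : Fin n → ℕ
  height_parent : ∀ v u, parent v = some u → height v + 1 = height u
  pw_pos : ∀ v, parent v ≠ none → 1 ≤ pw v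
  height_zero_no_children : ∀ u, height u = 0 → ∀ v, parent v ≠ some u
  childless_qw : ∀ u, (∀ v, parent v ≠ some u) → 1 ≤ qw u → height u = 0
  conservation : ∀ u : Fin n, (∃ v, parent v = some u) →
    qw u = ∑ v ∈ Finset.univ.filter (fun v => parent v = some u), pw v

namespace DecForest

variable (F : DecForest)

/-- `v` is a root of the forest. -/
def isRoot (v : Fin F.n) : Prop := F.parent v = none

/-- The set of children of a vertex. -/
def children (u : Fin F.n) : Finset (Fin F.n) :=
  Finset.univ.filter fun v => F.parent v = some u

/-- The number of children of a vertex. -/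
def childCount (u : Fin F.n) : ℕ := (F.children u).card

/-- `v` is a leaf: a non-root vertex without children. -/
def isLeaf (v : Fin F.n) : Prop := F.parent v ≠ none ∧ F.childCount v = 0

/-- `v` is a trivial root: a root without children. -/
def isTrivialRoot (v : Fin F.n) : Prop := F.parent v = none ∧ F.childCount v = 0

/-- Two (non-root) vertices are siblings if they are distinct and share a parent. -/
def sibling (u v : Fin F.n) : Prop :=
  u ≠ v ∧ ∃ w, F.parent u = some w ∧ F.parent v = some w

/-- The number of non-trivial roots `|R(F)| - |R₀(F)|`. -/
def nontrivialRootCount : ℕ :=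
  (Finset.univ.filter fun v => F.isRoot v ∧ F.childCount v ≠ 0).card

end DecForest

/-- The polynomial `γ(Ψ; F, ℓ) = N⁻¹ ∏_{u→v ∈ E} Ψ_{ℓ_u ℓ_v}^{p_v}`. -/
def gammaPoly {N : ℕ} (F : DecForest) (Ψ : Matrix (Fin N) (Fin N) ℝ)
    (ℓ : Fin F.n → Fin N) : ℝ :=
  (N : ℝ)⁻¹ * ∏ v : Fin F.n, (F.parent v).elim 1 fun u => Ψ (ℓ u) (ℓ v) ^ F.pw v

/-- A coloring `ℓ` is consistent with the partition whose blocks are the fibers of `b`. -/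
def Consistent {n N : ℕ} (b : Fin n → Fin n) (ℓ : Fin n → Fin N) : Prop :=
  ∀ u v, ℓ u = ℓ v ↔ b u = b v

/-- `Γ(Ψ; F, π) = ∑_{ℓ ∈ C(π)} γ(Ψ; F, ℓ)`, the partition `π` being encoded by the
fibers of the function `b`. -/
def GammaSum {N : ℕ} (F : DecForest) (b : Fin F.n → Fin F.n)
    (Ψ : Matrix (Fin N) (Fin N) ℝ) : ℝ :=
  ∑ ℓ ∈ Finset.univ.filter (fun ℓ : Fin F.n → Fin N => Consistent b ℓ), gammaPoly F Ψ ℓ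

/-- The number `|π|` of blocks of the partition encoded by `b`. -/
def numBlocks {n : ℕ} (b : Fin n → Fin n) : ℕ := (Finset.univ.image b).card

/-- The cardinality of the block of `v` in the partition encoded by `b`. -/
def blockCard {n : ℕ} (b : Fin n → Fin n) (v : Fin n) : ℕ :=
  (Finset.univ.filter fun u => b u = b v).card

/-- `v, v'` is a pair of nullifying leaves (with the corresponding pair of nullifying
edges) for the configuration `(F, π)`. -/
def NullifyingPair (F : DecForest) (b : Fin F.n → Fin F.n) (v v' : Fin F.n) : Prop :=
  v ≠ v' ∧ F.isLeaf v ∧ F.isLeaf v' ∧ F.pw v = 1 ∧ F.pw v' = 1 ∧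
    b v = b v' ∧ (∀ u, b u = b v → u = v ∨ u = v') ∧
    ∀ u u', F.parent v = some u → F.parent v' = some u' → b u ≠ b u'

/-- `v, v'` is a removable pair of leaves (with the corresponding removable pair of
edges) for the configuration `(F, π)`. -/
def RemovablePair (F : DecForest) (b : Fin F.n → Fin F.n) (v v' : Fin F.n) : Prop :=
  v ≠ v' ∧ F.isLeaf v ∧ F.isLeaf v' ∧ F.pw v = 1 ∧ F.pw v' = 1 ∧
    b v = b v' ∧ (∀ u, b u = b v → u = v ∨ u = v') ∧
    ∀ u u', F.parent v = some u → F.parent v' = some u' → b u = b u'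

/-- The number `|L₀(F, π)|` of nullifying leaves of the configuration. -/
def nullLeafCount (F : DecForest) (b : Fin F.n → Fin F.n) : ℕ :=
  (Finset.univ.filter fun v => ∃ v', NullifyingPair F b v v').card

/-- The exponent `η(F, π) = |L₀(F,π)|/4 + 1 - |π| + (1/2) ∑_{v ∉ R(F)} p_v`. -/
def etaExponent (F : DecForest) (b : Fin F.n → Fin F.n) : ℝ :=
  (nullLeafCount F b : ℝ) / 4 + 1 - (numBlocks b : ℝ) +
    (1 / 2 : ℝ) * ∑ v ∈ Finset.univ.filter (fun v => F.parent v ≠ none), (F.pw v : ℝ)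

/-- The contribution of a vertex to the parity count of its block (also the exponent of
its sign variable): `q_u` for non-trivial roots, `p_v` for leaves, `p_u + q_u` for
internal non-root vertices, `0` for trivial roots. -/
def vertexContrib (F : DecForest) (v : Fin F.n) : ℕ :=
  if F.parent v = none then (if F.childCount v = 0 then 0 else F.qw v)
  else if F.childCount v = 0 then F.pw v
  else F.pw v + F.qw v

/-- The parity rule/property: the total contribution of every block is even. -/
def ParityProp (F : DecForest) (b : Fin F.n → Fin F.n) : Prop :=
  ∀ v : Fin F.n,
    Even (∑ u ∈ Finset.univ.filter (fun u => b u = b v), vertexContrib F u)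

/-- Relevant configurations (Definition 5.6 of the paper). -/
structure RelevantConfig (F : DecForest) (b : Fin F.n → Fin F.n) : Prop where
  root_rule : ∀ u v, F.isRoot u → F.isRoot v → b u = b v
  sibling_rule : ∀ u v, F.sibling u v → b u ≠ b v
  forbidden_weights : ∀ v, ¬F.isRoot v →
    ¬(F.pw v = 1 ∧ F.qw v = 1) ∧ ¬(F.pw v = 2 ∧ F.qw v = 0)
  leaf_rule : ∀ v, F.isLeaf v → 1 ≤ F.qw v → blockCard b v ≠ 1
  trivial_root_rule : ∀ v, F.isTrivialRoot v → 1 ≤ F.qw v → blockCard b v ≠ 1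
  parity_rule : ParityProp F b

/-- Simple configurations (Definition 5.9 of the paper). -/
structure SimpleConfig (F : DecForest) (b : Fin F.n → Fin F.n) : Prop where
  root_prop : ∀ u v, F.isRoot u → F.isRoot v → b u = b v
  singleton_leaf : ∀ v, F.isLeaf v → blockCard b v = 1 → 4 ≤ F.pw v
  paired_leaf : ∀ v v', v ≠ v' → F.isLeaf v → F.isLeaf v' → F.pw v = 1 → F.pw v' = 1 →
    b v = b v' → (∀ u, b u = b v → u = v ∨ u = v') →
    ∀ u u', F.parent v = some u → F.parent v' = some u' → b u ≠ b u'
  forbidden_weights : ∀ v, ¬F.isRoot v → blockCard b v = 1 →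
    ¬(F.pw v = 1 ∧ F.qw v = 1) ∧ ¬(F.pw v = 2 ∧ F.qw v = 0)
  parity_prop : ParityProp F b

/-- Semi-simple configurations (Definition 7.1 of the paper). -/
structure SemiSimpleConfig (F : DecForest) (b : Fin F.n → Fin F.n) : Prop where
  root_prop : ∀ u v, F.isRoot u → F.isRoot v → b u = b v
  sibling_prop : ∀ u v, F.sibling u v →
    ¬(b u = b v ∧ ∀ w, b w = b u → w = u ∨ w = v)
  singleton_leaf : ∀ v, F.isLeaf v → blockCard b v = 1 → 4 ≤ F.pw v
  forbidden_weights : ∀ v, ¬F.isRoot v → blockCard b v = 1 →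
    ¬(F.pw v = 1 ∧ F.qw v = 1) ∧ ¬(F.pw v = 2 ∧ F.qw v = 0)
  parity_prop : ParityProp F b

end

/-!
Let `v, v'` be the removable leaves and `u, u'` their parents; `u ≠ u'` by the sibling property
and `π(u) = π(u')`. Let `F₀` be `F` with the edges `u → v`, `u' → v'` cut and `{v, v'}` merged
into the block of the roots, and for each other block `B` let `π_B` be `π` with `{v, v'}` merged
into `B`. For a coloring `μ` consistent with the partition of `F₀`, summing `γ(F, ·)` over the
colour `j` given to `{v, v'}` yields `(∑ⱼ Ψ_{aj}²) γ(F₀, μ) = (ΨΨᵀ)_{aa} γ(F₀, μ) = γ(F₀, μ)`,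
where `a` is the colour of `u` and `u'`. On the other hand, the colours `j` unused off `{v, v'}`
give exactly `C(π)`, and the colour of a block `B` gives `C(π_B)`.

Merging `{v, v'}` into another block creates no singleton and adds two even block sums, and
cutting the two edges changes the block sums of `π(v)` and `π(u)` by even amounts, so all the
configurations are semi-simple. If `F` has a single non-trivial root, one of `u, u'` lies strictly
below it, so that root has a child which is not a leaf and stays non-trivial in `F₀`.
-/

open Finset

namespace DecForest

variable (F : DecForest)

theorem mem_children {u v : Fin F.n} : v ∈ F.children u ↔ F.parent v = some u := by
  simp [children]

theorem childCount_eq_zero_iff {u : Fin F.n} : F.childCount u = 0 ↔ ∀ v, F.parent v ≠ some u := by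
  simp [childCount, children, Finset.filter_eq_empty_iff]

variable {F}

theorem parent_ne_self {u v : Fin F.n} (h : F.parent v = some u) : u ≠ v := by
  rintro rfl; have := F.height_parent _ _ h; omega

theorem isLeaf.parent_ne {u v : Fin F.n} (hv : F.isLeaf v) : F.parent u ≠ some v :=
  (F.childCount_eq_zero_iff).1 hv.2 u

theorem childCount_ne_zero_of_parent {x y : Fin F.n} (h : F.parent y = some x) :
    F.childCount x ≠ 0 :=
  fun h0 => (F.childCount_eq_zero_iff).1 h0 y h

/-- A vertex of maximal height among the non-root vertices with children hangs from a root. -/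
theorem exists_root_grandparent {w : Fin F.n} (hw : ¬F.isRoot w) (hcw : F.childCount w ≠ 0) :
    ∃ c ρ, F.parent c = some ρ ∧ F.isRoot ρ ∧ F.childCount c ≠ 0 := by
  classical
  obtain ⟨c, hc, hmax⟩ := (univ.filter fun x => ¬F.isRoot x ∧ F.childCount x ≠ 0).exists_max_image
    F.height ⟨w, by simp [hw, hcw]⟩
  simp only [Finset.mem_filter, Finset.mem_univ, true_and] at hc hmax
  obtain ⟨ρ, hρ⟩ := Option.ne_none_iff_exists'.1 hc.1
  refine ⟨c, ρ, hρ, by_contra fun hρr => ?_, hc.2⟩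
  have := hmax ρ ⟨hρr, childCount_ne_zero_of_parent hρ⟩
  have := F.height_parent c ρ hρ
  omega

theorem exists_isRoot (x : Fin F.n) : ∃ r, F.isRoot r := by
  obtain ⟨r, -, hmax⟩ := (univ : Finset (Fin F.n)).exists_max_image F.height ⟨x, mem_univ x⟩
  refine ⟨r, Option.eq_none_iff_forall_ne_some.2 fun p hp => ?_⟩
  have := hmax p (mem_univ p)
  have := F.height_parent r p hp
  omega

@[reducible] def detach (v : Fin F.n) : DecForest where
  n := F.n
  parent y := if y = v then none else F.parent y
  height := F.height
  pw := F.pw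
  qw x := if F.parent v = some x then F.qw x - F.pw v else F.qw x
  height_parent y x h := by
    split_ifs at h
    exact F.height_parent y x h
  pw_pos y h := by
    split_ifs at h with hy
    · exact absurd rfl h
    · exact F.pw_pos y h
  height_zero_no_children x hx y h := by
    split_ifs at h
    exact F.height_zero_no_children x hx y h
  childless_qw x hx hq := by
    have hx' : ∀ y, y ≠ v → F.parent y ≠ some x := fun y hy => by simpa [hy] using hx y
    split_ifs at hq with hvx
    · have hchildren : F.children x = {v} :=
        Finset.eq_singleton_iff_unique_mem.2 ⟨(F.mem_children).2 hvx,
          fun y hy => by_contra fun hyv => hx' y hyv ((F.mem_children).1 hy)⟩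
      have := F.conservation x ⟨v, hvx⟩
      rw [show Finset.univ.filter (fun y => F.parent y = some x) = {v} from hchildren,
        Finset.sum_singleton] at this
      omega
    · refine F.childless_qw x (fun y hy => ?_) hq
      rcases eq_or_ne y v with rfl | hyv
      · exact hvx hy
      · exact hx' y hyv hy
  conservation x := by
    rintro ⟨y, hy⟩
    have hchildren : Finset.univ.filter (fun y => (if y = v then none else F.parent y) = some x)
        = (F.children x).erase v := by
      ext y; by_cases hyv : y = v <;> simp [hyv, children]
    split_ifs at hy with hyv
    rw [hchildren]
    split_ifs with hvx
    · have hcons : F.qw x = ∑ w ∈ F.children x, F.pw w := F.conservation x ⟨y, hy⟩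
      rw [hcons, ← Finset.add_sum_erase _ _ ((F.mem_children).2 hvx)]
      simp
    · rw [Finset.erase_eq_of_notMem (fun h => hvx ((F.mem_children).1 h))]
      exact F.conservation x ⟨y, hy⟩

variable {v : Fin F.n}

theorem detach_qw_of_ne {x : Fin F.n} (h : F.parent v ≠ some x) : (F.detach v).qw x = F.qw x :=
  if_neg h

theorem detach_children (x : Fin F.n) : (F.detach v).children x = (F.children x).erase v := by
  ext y; by_cases hyv : y = v <;> simp [hyv, children]

theorem detach_childCount_of_ne {x : Fin F.n} (h : F.parent v ≠ some x) :
    (F.detach v).childCount x = F.childCount x := by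
  rw [childCount, detach_children, Finset.erase_eq_of_notMem (fun h' => h ((F.mem_children).1 h'))]
  rfl

theorem detach_childCount_le (x : Fin F.n) : (F.detach v).childCount x ≤ F.childCount x := by
  rw [childCount, detach_children]; exact Finset.card_erase_le

theorem detach_isRoot {x : Fin F.n} : (F.detach v).isRoot x ↔ x = v ∨ F.isRoot x := by
  by_cases hxv : x = v <;> simp [isRoot, hxv]

theorem sibling_of_detach_sibling {x y : Fin F.n} (h : (F.detach v).sibling x y) :
    F.sibling x y := by
  obtain ⟨hxy, w, hx, hy⟩ := h
  dsimp only at hx hy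
  split_ifs at hx hy
  exact ⟨hxy, w, hx, hy⟩

theorem isLeaf_of_detach_isLeaf {x : Fin F.n} (hx : (F.detach v).isLeaf x)
    (hvx : F.parent v ≠ some x) : F.isLeaf x := by
  obtain ⟨hroot, hleaf⟩ := hx
  refine ⟨fun h => hroot ?_, detach_childCount_of_ne hvx ▸ hleaf⟩
  simp [h]

theorem not_isRoot_of_detach {x : Fin F.n} (hx : ¬(F.detach v).isRoot x) : ¬F.isRoot x :=
  fun h => hx (detach_isRoot.2 (Or.inr h))

theorem vertexContrib_detach {u : Fin F.n} (hu : F.parent v = some u) (x : Fin F.n) :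
    vertexContrib (F.detach v) x + ((if x = v then F.pw v else 0) + (if x = u then F.pw v else 0))
      = vertexContrib F x := by
  have huv := parent_ne_self hu
  by_cases hxv : x = v
  · subst hxv
    have hcc := detach_childCount_of_ne (v := x) (x := x) (by rw [hu]; simpa using huv)
    simp only [vertexContrib, hcc, hu, if_neg huv.symm, if_true, reduceCtorEq, Option.some.injEq,
      huv, if_false]
    split_ifs <;> omega
  by_cases hxu : x = u
  · subst hxu
    have hmem : v ∈ F.children x := (F.mem_children).2 hu
    have hcc : (F.detach v).childCount x = ((F.children x).erase v).card := by
      rw [childCount, detach_children]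
    have hcc' : F.childCount x ≠ 0 := Finset.card_ne_zero.2 ⟨v, hmem⟩
    have hq : F.qw x = F.pw v + ∑ w ∈ (F.children x).erase v, F.pw w := by
      rw [Finset.add_sum_erase _ _ hmem]; exact F.conservation x ⟨v, hu⟩
    have hempty : ((F.children x).erase v).card = 0 → F.qw x = F.pw v := fun h => by
      rw [hq, Finset.card_eq_zero.1 h, Finset.sum_empty, add_zero]
    simp only [vertexContrib, hcc, hu, if_neg hxv, if_true, if_neg hcc']
    split_ifs <;> omega
  · have hcc := detach_childCount_of_ne (v := v) (x := x) (by rw [hu]; simpa [eq_comm] using hxu)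
    have hux : ¬ some u = some x := by simpa [eq_comm] using hxu
    simp only [vertexContrib, hcc, hu, hux, if_neg hxv, if_neg hxu, if_false]
    rfl

theorem sum_vertexContrib_detach {u : Fin F.n} (hu : F.parent v = some u) (s : Finset (Fin F.n)) :
    ∑ x ∈ s, vertexContrib (F.detach v) x
        + ((if v ∈ s then F.pw v else 0) + (if u ∈ s then F.pw v else 0))
      = ∑ x ∈ s, vertexContrib F x := by
  rw [← Finset.sum_congr rfl (fun x _ => vertexContrib_detach hu x), Finset.sum_add_distrib,
    Finset.sum_add_distrib, Finset.sum_ite_eq', Finset.sum_ite_eq']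

theorem nontrivialRootCount_detach_pair (h1 : F.nontrivialRootCount = 1) {v v' u u' : Fin F.n}
    (hv : F.isLeaf v) (hv' : F.isLeaf v') (hu : F.parent v = some u) (hu' : F.parent v' = some u')
    (huu' : u ≠ u') : ((F.detach v).detach v').nontrivialRootCount = 1 := by
  classical
  obtain ⟨r, hr⟩ := Finset.card_eq_one.1 h1
  have hr_unique : ∀ x, F.isRoot x → F.childCount x ≠ 0 → x = r := fun x hx hcx => by
    simpa using (Finset.ext_iff.1 hr x).1 (by simp [hx, hcx])
  obtain ⟨w, hw, hwr⟩ : ∃ w, F.childCount w ≠ 0 ∧ w ≠ r := by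
    by_cases hur : u = r
    · exact ⟨u', childCount_ne_zero_of_parent hu', fun h => huu' (hur.trans h.symm)⟩
    · exact ⟨u, childCount_ne_zero_of_parent hu, hur⟩
  obtain ⟨c, ρ, hcρ, hρ, hc⟩ :=
    exists_root_grandparent (fun hwroot => hwr (hr_unique w hwroot hw)) hw
  obtain rfl := hr_unique ρ hρ (childCount_ne_zero_of_parent hcρ)
  have hcv : c ≠ v := fun h => hc (h ▸ hv.2)
  have hcv' : c ≠ v' := fun h => hc (h ▸ hv'.2)
  refine Finset.card_eq_one.2 ⟨ρ, Finset.ext fun x => ?_⟩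
  simp only [Finset.mem_filter, Finset.mem_univ, true_and, Finset.mem_singleton]
  constructor
  · rintro ⟨hx, hcx⟩
    have hcx' : F.childCount x ≠ 0 := by
      have := detach_childCount_le (F := F.detach v) (v := v') x
      have := detach_childCount_le (F := F) (v := v) x
      omega
    rcases detach_isRoot.1 hx with hxv' | hx
    · exact absurd (hxv' ▸ hv'.2) hcx'
    rcases detach_isRoot.1 hx with hxv | hx
    · exact absurd (hxv ▸ hv.2) hcx'
    · exact hr_unique x hx hcx'
  · rintro rfl
    refine ⟨detach_isRoot.2 (Or.inr (detach_isRoot.2 (Or.inr hρ))),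
      childCount_ne_zero_of_parent (y := c) ?_⟩
    simp [hcv, hcv', hcρ]

end DecForest

open DecForest

section Partition

variable {n : ℕ} (b : Fin n → Fin n) (v : Fin n)

def mergeBlock (t : Fin n) (x : Fin n) : Fin n := if b x = b v then t else b x

variable {b v}

@[simp] theorem mergeBlock_self : mergeBlock b v (b v) = b := by
  funext x; unfold mergeBlock; split_ifs with h <;> simp [h]

theorem mergeBlock_congr {t x y : Fin n} (h : b x = b y) :
    mergeBlock b v t x = mergeBlock b v t y := by
  simp only [mergeBlock, h]

theorem mergeBlock_eq_label_iff {t z : Fin n} : mergeBlock b v t z = t ↔ b z = b v ∨ b z = t := by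
  unfold mergeBlock; split_ifs with h <;> simp [h]

theorem mergeBlock_eq_iff_of_ne {t x z : Fin n} (hx : mergeBlock b v t x ≠ t) :
    mergeBlock b v t z = mergeBlock b v t x ↔ b z = b x := by
  unfold mergeBlock at hx ⊢; split_ifs at hx ⊢ with h1 h2 <;> grind

theorem image_mergeBlock {t : Fin n} (ht : t ∈ univ.image b) (htv : t ≠ b v) :
    univ.image (mergeBlock b v t) = (univ.image b).erase (b v) := by
  ext s
  simp only [Finset.mem_image, Finset.mem_univ, true_and, Finset.mem_erase] at ht ⊢
  constructor
  · rintro ⟨x, rfl⟩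
    unfold mergeBlock
    split_ifs with h
    · exact ⟨htv, ht⟩
    · exact ⟨h, x, rfl⟩
  · rintro ⟨hs, x, rfl⟩
    exact ⟨x, if_neg hs⟩

theorem numBlocks_mergeBlock {t : Fin n} (ht : t ∈ univ.image b) (htv : t ≠ b v) :
    numBlocks (mergeBlock b v t) = numBlocks b - 1 := by
  rw [numBlocks, image_mergeBlock ht htv,
    Finset.card_erase_of_mem (mem_image_of_mem b (mem_univ v))]
  rfl

theorem one_lt_blockCard {x y z : Fin n} (hyz : y ≠ z) (hy : b y = b x) (hz : b z = b x) :
    1 < blockCard b x :=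
  Finset.one_lt_card.2 ⟨y, by simpa using hy, z, by simpa using hz, hyz⟩

theorem blockCard_mergeBlock_of_ne {t x : Fin n} (hx : mergeBlock b v t x ≠ t) :
    blockCard (mergeBlock b v t) x = blockCard b x := by
  unfold blockCard
  congr 1
  ext z
  simp [mergeBlock_eq_iff_of_ne hx]

theorem mergeBlock_ne_of_blockCard_eq_one {c x : Fin n} (hcv : b c ≠ b v)
    (hx : blockCard (mergeBlock b v (b c)) x = 1) : mergeBlock b v (b c) x ≠ b c := by
  intro h
  refine (one_lt_blockCard (y := v) (z := c) ?_ ?_ ?_).ne' hx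
  · rintro rfl; exact hcv rfl
  · rw [h, mergeBlock_eq_label_iff]; exact Or.inl rfl
  · rw [h, mergeBlock_eq_label_iff]; exact Or.inr rfl

end Partition

section Configuration

variable {F : DecForest} {b : Fin F.n → Fin F.n}

/-- Cutting two edges of equal weight whose heads share a block and whose tails share a block
changes every block sum by an even amount. -/
theorem parityProp_detach_pair (h : ParityProp F b) {v v' u u' : Fin F.n} (hvv' : v ≠ v')
    (hu : F.parent v = some u) (hu' : F.parent v' = some u') (hpw : F.pw v = F.pw v')
    (hbv : b v = b v') (hbu : b u = b u') : ParityProp ((F.detach v).detach v') b := by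
  intro x
  have hu'' : (F.detach v).parent v' = some u' := by simpa [hvv'.symm] using hu'
  obtain ⟨k, hk⟩ := h x
  rw [← sum_vertexContrib_detach hu, ← sum_vertexContrib_detach hu''] at hk
  simp only [Finset.mem_filter, Finset.mem_univ, true_and, ← hbv, ← hbu, ← hpw] at hk
  have even_of_add_add {s a k : ℕ} (h : s + a + a = k + k) : Even s := ⟨k - a, by omega⟩
  exact even_of_add_add hk

theorem parityProp_mergeBlock (h : ParityProp F b) {v c : Fin F.n} (hcv : b c ≠ b v) :
    ParityProp F (mergeBlock b v (b c)) := by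
  intro x
  have hx := h x
  have hv := h v
  have hc := h c
  rw [Finset.sum_filter] at hx hv hc ⊢
  by_cases hxc : mergeBlock b v (b c) x = b c
  · have hvc := Nat.even_add.2 (iff_of_true hv hc)
    rw [← Finset.sum_add_distrib] at hvc
    convert hvc using 2 with z
    simp only [hxc, mergeBlock_eq_label_iff]
    split_ifs <;> simp_all
  · convert hx using 1
    simp only [mergeBlock_eq_iff_of_ne hxc]

theorem semiSimpleConfig_mergeBlock (h : SemiSimpleConfig F b) {v v' c : Fin F.n} (hvv' : v ≠ v')
    (hbv : b v' = b v) (hcv : b c ≠ b v) : SemiSimpleConfig F (mergeBlock b v (b c)) where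
  root_prop x y hx hy := mergeBlock_congr (h.root_prop x y hx hy)
  sibling_prop x y hxy := by
    rintro ⟨hM, hblock⟩
    by_cases hxc : mergeBlock b v (b c) x = b c
    · have mem : ∀ w, (b w = b v ∨ b w = b c) → w = x ∨ w = y := fun w hw =>
        hblock w (by rw [hxc]; exact mergeBlock_eq_label_iff.2 hw)
      have hcv' : c ≠ v := fun h => hcv (h ▸ rfl)
      have hcv'' : c ≠ v' := fun h => hcv (h ▸ hbv)
      rcases mem v (Or.inl rfl) with rfl | rfl <;> rcases mem v' (Or.inl hbv) with rfl | rfl <;>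
        rcases mem c (Or.inr rfl) with rfl | rfl <;> simp_all
    · refine h.sibling_prop x y hxy ⟨((mergeBlock_eq_iff_of_ne hxc).1 hM.symm).symm, fun w hw => ?_⟩
      exact hblock w ((mergeBlock_eq_iff_of_ne hxc).2 hw)
  singleton_leaf x hx h1 := by
    have hxc := mergeBlock_ne_of_blockCard_eq_one hcv h1
    exact h.singleton_leaf x hx (blockCard_mergeBlock_of_ne hxc ▸ h1)
  forbidden_weights x hx h1 := by
    have hxc := mergeBlock_ne_of_blockCard_eq_one hcv h1
    exact h.forbidden_weights x hx (blockCard_mergeBlock_of_ne hxc ▸ h1)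
  parity_prop := parityProp_mergeBlock h.parity_prop hcv

theorem semiSimpleConfig_detach_pair (h : SemiSimpleConfig F b) {v v' u u' : Fin F.n}
    (hvv' : v ≠ v') (huu' : u ≠ u') (hu : F.parent v = some u) (hu' : F.parent v' = some u')
    (hpw : F.pw v = F.pw v') (hbv : b v = b v') (hbu : b u = b u')
    (hroot : ∀ x, F.isRoot x → b x = b v) : SemiSimpleConfig ((F.detach v).detach v') b := by
  have hu'' : (F.detach v).parent v' = some u' := by simpa [hvv'.symm] using hu'
  have root_label : ∀ x, ((F.detach v).detach v').isRoot x → b x = b v := by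
    intro x hx
    rcases detach_isRoot.1 hx with hxv' | hx
    · rw [hxv', hbv]
    rcases detach_isRoot.1 hx with hxv | hx
    · rw [hxv]
    · exact hroot x hx
  have not_parent : ∀ x, blockCard b x = 1 →
      F.parent v ≠ some x ∧ (F.detach v).parent v' ≠ some x := by
    intro x hx
    rw [hu, hu'', Ne, Ne, Option.some_inj, Option.some_inj]
    constructor <;> rintro rfl
    · exact (one_lt_blockCard huu' rfl hbu.symm).ne' hx
    · exact (one_lt_blockCard huu' hbu rfl).ne' hx
  refine ⟨fun x y hx hy => (root_label x hx).trans (root_label y hy).symm,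
    fun x y hxy => h.sibling_prop x y (sibling_of_detach_sibling (sibling_of_detach_sibling hxy)),
    fun x hx h1 => ?_, fun x hx h1 => ?_,
    parityProp_detach_pair h.parity_prop hvv' hu hu' hpw hbv hbu⟩
  · obtain ⟨hv, hv'⟩ := not_parent x h1
    exact h.singleton_leaf x (isLeaf_of_detach_isLeaf (isLeaf_of_detach_isLeaf hx hv') hv) h1
  · obtain ⟨hv, hv'⟩ := not_parent x h1
    have hq : ((F.detach v).detach v').qw x = F.qw x :=
      (detach_qw_of_ne hv').trans (detach_qw_of_ne hv)
    rw [hq]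
    exact h.forbidden_weights x (not_isRoot_of_detach (not_isRoot_of_detach hx)) h1

theorem RemovablePair.exists_parents {v v' : Fin F.n} (hpair : RemovablePair F b v v')
    (hss : SemiSimpleConfig F b) :
    ∃ u u', F.parent v = some u ∧ F.parent v' = some u' ∧ u ≠ u' ∧ b u = b u' := by
  obtain ⟨hvv', hv, hv', -, -, hbv, hblock, hparents⟩ := hpair
  obtain ⟨u, hu⟩ := Option.ne_none_iff_exists'.1 hv.1
  obtain ⟨u', hu'⟩ := Option.ne_none_iff_exists'.1 hv'.1
  refine ⟨u, u', hu, hu', ?_, hparents u u' hu hu'⟩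
  rintro rfl
  exact hss.sibling_prop v v' ⟨hvv', u, hu, hu'⟩ ⟨hbv, hblock⟩

end Configuration

section Coloring

variable {n N : ℕ} {b : Fin n → Fin n} {v : Fin n}

open scoped Classical in
/-- The set `C(π)` of colorings consistent with the partition encoded by `b`. -/
noncomputable def colorings (b : Fin n → Fin n) (N : ℕ) : Finset (Fin n → Fin N) :=
  univ.filter (Consistent b)

theorem mem_colorings {ℓ : Fin n → Fin N} : ℓ ∈ colorings b N ↔ Consistent b ℓ := by
  simp [colorings]

theorem gammaSum_eq_sum_colorings (F : DecForest) (b : Fin F.n → Fin F.n)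
    (Ψ : Matrix (Fin N) (Fin N) ℝ) : GammaSum F b Ψ = ∑ ℓ ∈ colorings b N, gammaPoly F Ψ ℓ :=
  rfl

variable (b v) in
def recolorBlock (μ : Fin n → Fin N) (j : Fin N) (x : Fin n) : Fin N :=
  if b x = b v then j else μ x

theorem recolorBlock_of_ne {μ : Fin n → Fin N} {j : Fin N} {x : Fin n} (h : b x ≠ b v) :
    recolorBlock b v μ j x = μ x := if_neg h

theorem recolorBlock_of_eq {μ : Fin n → Fin N} {j : Fin N} {x : Fin n} (h : b x = b v) :
    recolorBlock b v μ j x = j := if_pos h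

@[simp] theorem recolorBlock_recolorBlock (μ : Fin n → Fin N) (j j' : Fin N) :
    recolorBlock b v (recolorBlock b v μ j) j' = recolorBlock b v μ j' := by
  funext x; unfold recolorBlock; split_ifs <;> rfl

theorem recolorBlock_self_of_consistent {s x : Fin n} {ℓ : Fin n → Fin N}
    (hℓ : Consistent (mergeBlock b v s) ℓ) (hx : mergeBlock b v s x = s) :
    recolorBlock b v ℓ (ℓ x) = ℓ := by
  funext y
  unfold recolorBlock
  split_ifs with h
  · exact ((hℓ y x).2 (by rw [hx]; exact if_pos h)).symm
  · rfl

theorem recolorBlock_self_of_consistent' {s : Fin n} {ℓ : Fin n → Fin N}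
    (hℓ : Consistent (mergeBlock b v s) ℓ) : recolorBlock b v ℓ (ℓ v) = ℓ :=
  recolorBlock_self_of_consistent hℓ (if_pos rfl)

theorem consistent_mergeBlock_recolorBlock_iff {s : Fin n} {μ : Fin n → Fin N} {j : Fin N} :
    Consistent (mergeBlock b v s) (recolorBlock b v μ j) ↔
      (∀ x y, b x ≠ b v → b y ≠ b v → (μ x = μ y ↔ b x = b y)) ∧
        ∀ x, b x ≠ b v → (μ x = j ↔ b x = s) := by
  have hM : ∀ {x}, b x ≠ b v → mergeBlock b v s x = b x := fun h => if_neg h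
  have hMv : ∀ {x}, b x = b v → mergeBlock b v s x = s := fun h => if_pos h
  constructor
  · intro h
    refine ⟨fun x y hx hy => ?_, fun x hx => ?_⟩
    · simpa [recolorBlock_of_ne hx, recolorBlock_of_ne hy, hM hx, hM hy] using h x y
    · simpa [recolorBlock_of_ne hx, recolorBlock_of_eq (rfl : b v = b v), hM hx,
        hMv (rfl : b v = b v)] using h x v
  · rintro ⟨hoff, hj⟩ x y
    by_cases hx : b x = b v <;> by_cases hy : b y = b v
    · simp [recolorBlock_of_eq hx, recolorBlock_of_eq hy, hMv hx, hMv hy]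
    · simpa [recolorBlock_of_eq hx, recolorBlock_of_ne hy, hMv hx, hM hy, eq_comm] using hj y hy
    · simpa [recolorBlock_of_ne hx, recolorBlock_of_eq hy, hM hx, hMv hy] using hj x hx
    · simpa [recolorBlock_of_ne hx, recolorBlock_of_ne hy, hM hx, hM hy] using hoff x y hx hy

theorem consistent_off_block_of_consistent {s : Fin n} {μ : Fin n → Fin N}
    (hμ : Consistent (mergeBlock b v s) μ) :
    ∀ x y, b x ≠ b v → b y ≠ b v → (μ x = μ y ↔ b x = b y) := by
  rw [← recolorBlock_self_of_consistent' hμ] at hμ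
  exact (consistent_mergeBlock_recolorBlock_iff.1 hμ).1

/-- For `s = b v` the inner sum runs over the colours unused off the block of `v`; for another
block label `s = b c` it has the single term `j = μ c`. -/
theorem sum_colorings_mergeBlock {M : Type*} [AddCommMonoid M] {r : Fin n} (hrv : b r ≠ b v)
    (s : Fin n) (g : (Fin n → Fin N) → M) :
    ∑ ℓ ∈ colorings (mergeBlock b v s) N, g ℓ =
      ∑ μ ∈ colorings (mergeBlock b v (b r)) N,
        ∑ j ∈ univ.filter (fun j => ∀ x, b x ≠ b v → (μ x = j ↔ b x = s)),
          g (recolorBlock b v μ j) := by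
  classical
  have hr : mergeBlock b v (b r) r = b r := if_neg hrv
  rw [← Finset.sum_finset_product' (univ.filter fun p : (Fin n → Fin N) × Fin N =>
    Consistent (mergeBlock b v (b r)) p.1 ∧ ∀ x, b x ≠ b v → (p.1 x = p.2 ↔ b x = s)) _ _
    (by simp [mem_colorings])]
  refine Finset.sum_nbij' (fun ℓ => (recolorBlock b v ℓ (ℓ r), ℓ v))
    (fun p => recolorBlock b v p.1 p.2) (fun ℓ hℓ => ?_) (fun p hp => ?_) (fun ℓ hℓ => ?_)
    (fun p hp => ?_) (fun ℓ hℓ => ?_)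
  · rw [mem_colorings] at hℓ
    have hsplit := recolorBlock_self_of_consistent' hℓ ▸ hℓ
    obtain ⟨hoff, hj⟩ := consistent_mergeBlock_recolorBlock_iff.1 hsplit
    simp only [mem_filter, mem_univ, true_and]
    refine ⟨consistent_mergeBlock_recolorBlock_iff.2 ⟨hoff, fun x hx => hoff x r hx hrv⟩,
      fun x hx => ?_⟩
    rw [recolorBlock_of_ne hx]
    exact hj x hx
  · simp only [mem_filter, mem_univ, true_and] at hp
    rw [mem_colorings]
    exact consistent_mergeBlock_recolorBlock_iff.2 ⟨consistent_off_block_of_consistent hp.1, hp.2⟩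
  · rw [mem_colorings] at hℓ
    simp only [recolorBlock_recolorBlock]
    exact recolorBlock_self_of_consistent' hℓ
  · obtain ⟨μ, j⟩ := p
    simp only [mem_filter, mem_univ, true_and] at hp
    simp only [recolorBlock_recolorBlock, recolorBlock_of_ne hrv, recolorBlock_of_eq rfl,
      recolorBlock_self_of_consistent hp.1 hr]
  · rw [mem_colorings] at hℓ
    simp only [recolorBlock_recolorBlock, recolorBlock_self_of_consistent' hℓ]

theorem existsUnique_block_of_color {μ : Fin n → Fin N}
    (hoff : ∀ x y, b x ≠ b v → b y ≠ b v → (μ x = μ y ↔ b x = b y)) (j : Fin N) :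
    ∃! s, s ∈ univ.image b ∧ ∀ x, b x ≠ b v → (μ x = j ↔ b x = s) := by
  by_cases hj : ∃ x, b x ≠ b v ∧ μ x = j
  · obtain ⟨x, hx, rfl⟩ := hj
    refine ⟨b x, ⟨mem_image_of_mem b (mem_univ x), fun y hy => hoff y x hy hx⟩, ?_⟩
    rintro s ⟨-, hs⟩
    exact ((hs x hx).1 rfl).symm
  · simp only [not_exists, not_and] at hj
    refine ⟨b v, ⟨mem_image_of_mem b (mem_univ v), fun y hy => iff_of_false (hj y hy) hy⟩, ?_⟩
    rintro s ⟨hs_mem, hs⟩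
    obtain ⟨c, -, rfl⟩ := mem_image.1 hs_mem
    by_contra hcv
    exact hj c hcv ((hs c hcv).2 rfl)

theorem sum_image_sum_colorings_mergeBlock {M : Type*} [AddCommMonoid M] {r : Fin n}
    (hrv : b r ≠ b v) (g : (Fin n → Fin N) → M) :
    ∑ s ∈ univ.image b, ∑ ℓ ∈ colorings (mergeBlock b v s) N, g ℓ =
      ∑ μ ∈ colorings (mergeBlock b v (b r)) N, ∑ j, g (recolorBlock b v μ j) := by
  rw [Finset.sum_congr rfl fun s _ => sum_colorings_mergeBlock hrv s g]
  simp_rw [Finset.sum_filter]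
  rw [Finset.sum_comm]
  refine Finset.sum_congr rfl fun μ hμ => ?_
  rw [Finset.sum_comm]
  refine Finset.sum_congr rfl fun j _ => ?_
  obtain ⟨s, ⟨hs, hj⟩, huniq⟩ :=
    existsUnique_block_of_color (consistent_off_block_of_consistent (mem_colorings.1 hμ)) j
  rw [Finset.sum_eq_single_of_mem s hs fun s' hs' hne => if_neg fun h => hne (huniq s' ⟨hs', h⟩)]
  exact if_pos hj

end Coloring

section Gamma

variable {F : DecForest} {b : Fin F.n → Fin F.n} {N : ℕ} (Ψ : Matrix (Fin N) (Fin N) ℝ)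

theorem gammaPoly_eq_mul_detach {v u : Fin F.n} (hu : F.parent v = some u) (ℓ : Fin F.n → Fin N) :
    gammaPoly F Ψ ℓ = Ψ (ℓ u) (ℓ v) ^ F.pw v * gammaPoly (F.detach v) Ψ ℓ := by
  have hfactor : ∀ x, (F.parent x).elim 1 (fun w => Ψ (ℓ w) (ℓ x) ^ F.pw x) =
      (if x = v then Ψ (ℓ u) (ℓ v) ^ F.pw v else 1) *
        ((F.detach v).parent x).elim 1 (fun w => Ψ (ℓ w) (ℓ x) ^ F.pw x) := by
    intro x
    by_cases hxv : x = v
    · subst hxv; simp [hu]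
    · simp [hxv]
  unfold gammaPoly
  rw [Finset.prod_congr rfl fun x _ => hfactor x, Finset.prod_mul_distrib, Finset.prod_ite_eq']
  simp only [Finset.mem_univ, if_true]
  ring

theorem gammaPoly_congr {ℓ ℓ' : Fin F.n → Fin N}
    (h : ∀ x y, F.parent y = some x → ℓ x = ℓ' x ∧ ℓ y = ℓ' y) :
    gammaPoly F Ψ ℓ = gammaPoly F Ψ ℓ' := by
  unfold gammaPoly
  congr 1
  refine Finset.prod_congr rfl fun y _ => ?_
  cases hy : F.parent y with
  | none => rfl
  | some x => simp [(h x y hy).1, (h x y hy).2]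

variable {Ψ}

/-- Summing out the colour of a removable pair of leaves: the two edges into it contribute
`∑ⱼ Ψ_{aj}² = (ΨΨᵀ)_{aa} = 1`, where `a` is the common colour of the two parents. -/
theorem sum_gammaPoly_recolorBlock (hΨ : ∀ j : Fin N, (Ψ * Ψᵀ) j j = 1) {v v' u u' : Fin F.n}
    (hpair : RemovablePair F b v v') (hu : F.parent v = some u) (hu' : F.parent v' = some u')
    {μ : Fin F.n → Fin N} (hμ : μ u = μ u') :
    ∑ j, gammaPoly F Ψ (recolorBlock b v μ j) = gammaPoly ((F.detach v).detach v') Ψ μ := by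
  obtain ⟨hvv', hv, hv', hpw, hpw', hbv, hblock, -⟩ := hpair
  have off_block : ∀ {x}, x ≠ v → x ≠ v' → b x ≠ b v := fun hx hx' h =>
    (hblock _ h).elim hx hx'
  have hu_off : b u ≠ b v := off_block (parent_ne_self hu) fun h => hv'.parent_ne (h ▸ hu)
  have hu'_off : b u' ≠ b v := off_block (fun h => hv.parent_ne (h ▸ hu')) (parent_ne_self hu')
  have hu'' : (F.detach v).parent v' = some u' := by simpa [hvv'.symm] using hu'
  have hedge : ∀ j, gammaPoly F Ψ (recolorBlock b v μ j) =
      Ψ (μ u) j * Ψ (μ u) j * gammaPoly ((F.detach v).detach v') Ψ μ := by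
    intro j
    have hcongr : gammaPoly ((F.detach v).detach v') Ψ (recolorBlock b v μ j) =
        gammaPoly ((F.detach v).detach v') Ψ μ := by
      refine gammaPoly_congr Ψ fun x y hy => ?_
      obtain ⟨hyv', hyv, hy⟩ : y ≠ v' ∧ y ≠ v ∧ F.parent y = some x := by
        simp only at hy
        split_ifs at hy with h1 h2
        exact ⟨h1, h2, hy⟩
      have hxv : x ≠ v := fun h => hv.parent_ne (h ▸ hy)
      have hxv' : x ≠ v' := fun h => hv'.parent_ne (h ▸ hy)
      exact ⟨recolorBlock_of_ne (off_block hxv hxv'), recolorBlock_of_ne (off_block hyv hyv')⟩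
    rw [gammaPoly_eq_mul_detach Ψ hu, gammaPoly_eq_mul_detach Ψ hu'', hcongr,
      recolorBlock_of_ne hu_off, recolorBlock_of_ne hu'_off, recolorBlock_of_eq rfl,
      recolorBlock_of_eq hbv.symm, ← hμ]
    simp only [hpw, hpw', pow_one]
    ring
  have hrow : ∑ j, Ψ (μ u) j * Ψ (μ u) j = 1 := by
    simpa [Matrix.mul_apply] using hΨ (μ u)
  rw [Finset.sum_congr rfl fun j _ => hedge j, ← Finset.sum_mul, hrow, one_mul]

theorem gammaSum_detach_pair (hΨ : ∀ j : Fin N, (Ψ * Ψᵀ) j j = 1) {v v' u u' r : Fin F.n}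
    (hpair : RemovablePair F b v v') (hu : F.parent v = some u) (hu' : F.parent v' = some u')
    (hbu : b u = b u') (hrv : b r ≠ b v) :
    GammaSum ((F.detach v).detach v') (mergeBlock b v (b r)) Ψ =
      GammaSum F b Ψ + ∑ t ∈ (univ.image b).erase (b v), GammaSum F (mergeBlock b v t) Ψ := by
  calc GammaSum ((F.detach v).detach v') (mergeBlock b v (b r)) Ψ
      = ∑ s ∈ univ.image b, GammaSum F (mergeBlock b v s) Ψ := by
        simp only [gammaSum_eq_sum_colorings]
        rw [sum_image_sum_colorings_mergeBlock hrv]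
        refine Finset.sum_congr rfl fun μ hμ =>
          (sum_gammaPoly_recolorBlock hΨ hpair hu hu' ?_).symm
        exact (mem_colorings.1 hμ u u').2 (mergeBlock_congr hbu)
    _ = GammaSum F b Ψ + ∑ t ∈ (univ.image b).erase (b v), GammaSum F (mergeBlock b v t) Ψ := by
        rw [← Finset.add_sum_erase _ _ (mem_image_of_mem b (mem_univ v)), mergeBlock_self]

end Gamma

/-- **Lemma (removal step for a pair of removable edges).** -/
theorem removal_step
    (F : DecForest) (b : Fin F.n → Fin F.n) (hss : SemiSimpleConfig F b)
    (hrem : ∃ v v', RemovablePair F b v v') :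
    ∃ (F0 : DecForest) (b0 : Fin F0.n → Fin F0.n)
      (Fs : Fin (numBlocks b - 1) → DecForest)
      (bs : ∀ i : Fin (numBlocks b - 1), Fin (Fs i).n → Fin (Fs i).n),
      SemiSimpleConfig F0 b0 ∧ numBlocks b0 = numBlocks b - 1 ∧
      (∀ i, SemiSimpleConfig (Fs i) (bs i)) ∧
      (∀ i, numBlocks (bs i) = numBlocks b - 1) ∧
      (∀ (N : ℕ) (Ψ : Matrix (Fin N) (Fin N) ℝ),
        (∀ j : Fin N, (Ψ * Ψᵀ) j j = 1) →
          GammaSum F b Ψ =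
            GammaSum F0 b0 Ψ - ∑ i : Fin (numBlocks b - 1), GammaSum (Fs i) (bs i) Ψ) ∧
      (F.nontrivialRootCount = 1 →
        F0.nontrivialRootCount = 1 ∧ ∀ i, (Fs i).nontrivialRootCount = 1) := by
  obtain ⟨v, v', hpair⟩ := hrem
  have ⟨hvv', hv, hv', hpw, hpw', hbv, hblock, _⟩ := hpair
  obtain ⟨u, u', hu, hu', huu', hbu⟩ := hpair.exists_parents hss
  obtain ⟨r, hr⟩ := F.exists_isRoot v
  have hrv : b r ≠ b v := fun h =>
    (hblock r h).elim (fun h => hv.1 (h ▸ hr)) fun h => hv'.1 (h ▸ hr)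
  have hmerge : ∀ t ∈ (univ.image b).erase (b v),
      SemiSimpleConfig F (mergeBlock b v t) ∧ numBlocks (mergeBlock b v t) = numBlocks b - 1 := by
    intro t ht
    obtain ⟨htv, hmem⟩ := mem_erase.1 ht
    obtain ⟨c, -, rfl⟩ := mem_image.1 hmem
    exact ⟨semiSimpleConfig_mergeBlock hss hvv' hbv.symm htv, numBlocks_mergeBlock hmem htv⟩
  have hr_mem : b r ∈ (univ.image b).erase (b v) :=
    mem_erase.2 ⟨hrv, mem_image_of_mem b (mem_univ r)⟩
  have hT : ((univ.image b).erase (b v)).card = numBlocks b - 1 :=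
    card_erase_of_mem (mem_image_of_mem b (mem_univ v))
  set e := (((univ.image b).erase (b v)).equivFinOfCardEq hT).symm
  refine ⟨(F.detach v).detach v', mergeBlock b v (b r), fun _ => F, fun i => mergeBlock b v (e i),
    ?_, (hmerge _ hr_mem).2, fun i => (hmerge _ (e i).2).1, fun i => (hmerge _ (e i).2).2,
    fun N Ψ hΨ => ?_,
    fun h1 => ⟨nontrivialRootCount_detach_pair h1 hv hv' hu hu' huu', fun _ => h1⟩⟩
  · refine semiSimpleConfig_detach_pair (hmerge _ hr_mem).1 hvv' huu' hu hu' (hpw.trans hpw'.symm)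
      (mergeBlock_congr hbv) (mergeBlock_congr hbu) fun x hx => ?_
    exact (mergeBlock_congr (hss.root_prop x r hx hr)).trans ((if_neg hrv).trans (if_pos rfl).symm)
  · rw [gammaSum_detach_pair hΨ hpair hu hu' hbu hrv,
      e.sum_comp fun t => GammaSum F (mergeBlock b v t) Ψ,
      Finset.sum_coe_sort _ fun t => GammaSum F (mergeBlock b v t) Ψ, add_sub_cancel_right]
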